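/- Over the field ℝ of real numbers, a formal power series f(z) = a₁z + a₂z² + ⋯ with a₁ ≠ 0 of finite compositional order has order 1 or 2; if it has order 2 then a₁ = −1. -/

import Mathlib

/-!
The linear coefficient of the `m`-th iterate of `f` is `a₁ ^ m`, so `a₁ ^ n = 1` and, over `ℝ`,
`a₁ ^ 2 = 1`. If `f = X + c X^k + O(X^(k+1))` with `k ≥ 2`, its `m`-th iterate is
`X + m c X^k + O(X^(k+1))`; hence in characteristic zero the only series tangent to the identity
with an iterate equal to `X` is `X` itself. Applied to `f ∘ f`, whose `n`-th iterate is `X`, this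
gives `f ∘ f = X`, so `n ≤ 2`; and when `n = 2`, `a₁ = 1` would force `f = X`.
-/

open PowerSeries

/-- Composition (substitution) of formal power series: coefficient formula,
valid for `g` with zero constant term. -/
noncomputable def PS.comp {F : Type*} [CommRing F] (f g : PowerSeries F) : PowerSeries F :=
  PowerSeries.mk fun k =>
    ∑ n ∈ Finset.range (k + 1), (PowerSeries.coeff n f) * (PowerSeries.coeff k (g ^ n))

/-- The group `G` of series with zero constant term and nonzero linear coefficient. -/
def PS.G (F : Type*) [CommRing F] : Set (PowerSeries F) :=
  {f | PowerSeries.constantCoeff f = 0 ∧ PowerSeries.coeff 1 f ≠ 0}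

/-- `n`-fold compositional iterate of `f`. -/
noncomputable def PS.iter {F : Type*} [CommRing F] (f : PowerSeries F) : ℕ → PowerSeries F
  | 0 => PowerSeries.X
  | n + 1 => PS.comp f (PS.iter f n)

/-- `f` has compositional order exactly `n`. -/
def PS.HasOrder {F : Type*} [CommRing F] (f : PowerSeries F) (n : ℕ) : Prop :=
  PS.iter f n = PowerSeries.X ∧ ∀ m, 0 < m → m < n → PS.iter f m ≠ PowerSeries.X

namespace PS

variable {F : Type*} [CommRing F]

theorem coeff_pow_of_lt {g : F⟦X⟧} (hg : constantCoeff g = 0) {k n : ℕ} (h : k < n) :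
    coeff k (g ^ n) = 0 :=
  X_pow_dvd_iff.mp (pow_dvd_pow_of_dvd (X_dvd_iff.mpr hg) n) k h

theorem comp_eq_subst (f : F⟦X⟧) {g : F⟦X⟧} (hg : constantCoeff g = 0) :
    comp f g = f.subst g := by
  ext k
  rw [coeff_subst' (HasSubst.of_constantCoeff_zero' hg), comp, coeff_mk,
    finsum_eq_sum_of_support_subset (s := Finset.range (k + 1))]
  · rfl
  · intro d hd
    by_contra hdk
    simp only [Finset.coe_range, Set.mem_Iio, not_lt] at hdk
    exact hd (by simp [coeff_pow_of_lt hg (by omega : k < d)])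

theorem coeff_one_comp (f g : F⟦X⟧) : coeff 1 (comp f g) = coeff 1 f * coeff 1 g := by
  simp [comp, Finset.sum_range_succ, coeff_one]

theorem constantCoeff_comp (f g : F⟦X⟧) : constantCoeff (comp f g) = constantCoeff f := by
  simp [comp]

theorem constantCoeff_iter {f : F⟦X⟧} (hf : constantCoeff f = 0) (m : ℕ) :
    constantCoeff (iter f m) = 0 := by
  cases m with
  | zero => exact constantCoeff_X
  | succ m => rw [iter, constantCoeff_comp, hf]

theorem iter_one (f : F⟦X⟧) : iter f 1 = f := by
  simp [iter, comp_eq_subst f (constantCoeff_X (R := F))]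

theorem iter_succ {f : F⟦X⟧} (hf : constantCoeff f = 0) (m : ℕ) :
    iter f (m + 1) = f.subst (iter f m) :=
  comp_eq_subst f (constantCoeff_iter hf m)

theorem coeff_one_iter (f : F⟦X⟧) (m : ℕ) :
    coeff 1 (iter f m) = coeff 1 f ^ m := by
  induction m with
  | zero => simp [iter]
  | succ m ih => rw [iter, coeff_one_comp, ih, pow_succ']

theorem iter_add {f : F⟦X⟧} (hf : constantCoeff f = 0) (a b : ℕ) :
    iter f (a + b) = (iter f a).subst (iter f b) := by
  have hb := HasSubst.of_constantCoeff_zero' (constantCoeff_iter hf b)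
  induction a with
  | zero => rw [zero_add, iter, subst_X hb]
  | succ a ih =>
    rw [add_right_comm, iter_succ hf, ih, iter_succ hf,
      subst_comp_subst_apply (HasSubst.of_constantCoeff_zero' (constantCoeff_iter hf a)) hb]

theorem iter_mul {f : F⟦X⟧} (hf : constantCoeff f = 0) (a b : ℕ) :
    iter f (a * b) = iter (iter f a) b := by
  induction b with
  | zero => rfl
  | succ b ih =>
    rw [mul_add_one, add_comm, iter_add hf, ih, iter_succ (constantCoeff_iter hf a)]

theorem iter_X (m : ℕ) : iter (X : F⟦X⟧) m = X := by
  induction m with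
  | zero => rfl
  | succ m ih => rw [iter_succ constantCoeff_X, ih, X_subst]

theorem subst_of_X_pow_dvd_sub_X {k : ℕ} (hk : 2 ≤ k) {f g : F⟦X⟧}
    (hf : X ^ k ∣ f - X) (hg : X ^ k ∣ g - X) :
    X ^ k ∣ f.subst g - X ∧ coeff k (f.subst g) = coeff k f + coeff k g := by
  obtain ⟨u, hu⟩ := hf
  obtain ⟨v, hv⟩ := hg
  obtain ⟨j, rfl⟩ : ∃ j, k = j + 2 := ⟨k - 2, by omega⟩
  have hf' : f = X + X ^ (j + 2) * u := by rw [← hu]; ring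
  have hg' : g = X * (1 + X ^ (j + 1) * v) := by rw [sub_eq_iff_eq_add'.mp hv]; ring
  have hg : HasSubst g := HasSubst.of_constantCoeff_zero' (by simp [hg'])
  have hsubst : f.subst g = g + g ^ (j + 2) * u.subst g := by
    rw [hf', subst_add hg, subst_mul hg, subst_pow hg, subst_X hg]
  have hdvd : X ^ (j + 2) ∣ g ^ (j + 2) := pow_dvd_pow_of_dvd (hg' ▸ dvd_mul_right _ _) _
  refine ⟨?_, ?_⟩
  · rw [hsubst, add_sub_right_comm, hv]
    exact dvd_add (dvd_mul_right _ _) (dvd_mul_of_dvd_left hdvd _)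
  · rw [hsubst, hf', map_add, map_add, add_comm]
    congr 1
    rw [← comp_eq_subst u (by simp [hg']), hg', mul_pow, mul_assoc, coeff_X_pow_mul',
      coeff_X_pow_mul']
    simp [constantCoeff_comp, coeff_X]

theorem iter_of_X_pow_dvd_sub_X {k : ℕ} (hk : 2 ≤ k) {f : F⟦X⟧} (hf : X ^ k ∣ f - X) (m : ℕ) :
    X ^ k ∣ iter f m - X ∧ coeff k (iter f m) = m • coeff k f := by
  have hf0 : constantCoeff f = 0 :=
    X_dvd_iff.mp (dvd_sub_self_right.mp ((dvd_pow_self X (by omega)).trans hf))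
  induction m with
  | zero => simp [iter, coeff_X, show k ≠ 1 by omega]
  | succ m ih =>
    obtain ⟨hdvd, hcoeff⟩ := subst_of_X_pow_dvd_sub_X hk hf ih.1
    rw [iter_succ hf0, hcoeff, ih.2, succ_nsmul']
    exact ⟨hdvd, rfl⟩

theorem eq_X_of_iter_eq_X [IsAddTorsionFree F] {f : F⟦X⟧} (hf0 : constantCoeff f = 0)
    (hf1 : coeff 1 f = 1) {n : ℕ} (hn : n ≠ 0) (h : iter f n = X) : f = X := by
  by_contra hne
  set k := (f - X).order.toNat
  have hk : 2 ≤ k := by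
    have : (2 : ℕ∞) ≤ (f - X).order := nat_le_order _ _ fun i hi => by
      interval_cases i <;> simp [hf0, hf1]
    have htop : (f - X).order ≠ ⊤ := order_eq_top.not.mpr (sub_ne_zero.mpr hne)
    simpa using ENat.toNat_le_toNat this htop
  have hcoeff := (iter_of_X_pow_dvd_sub_X hk X_pow_order_dvd n).2
  rw [h, coeff_X, if_neg (by omega), eq_comm, nsmul_eq_zero_iff_right hn] at hcoeff
  exact coeff_order (sub_ne_zero.mpr hne)
    (show coeff k (f - X) = 0 by rw [map_sub, hcoeff, coeff_X, if_neg (by omega), sub_zero])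

end PS

theorem stmt_15 (f : PowerSeries ℝ) (hf : f ∈ PS.G ℝ) (n : ℕ) (hn : 0 < n)
    (hord : PS.HasOrder f n) :
    (n = 1 ∨ n = 2) ∧ (n = 2 → PowerSeries.coeff 1 f = -1) := by
  obtain ⟨hf0, -⟩ := hf
  obtain ⟨hiter, hmin⟩ := hord
  have hc : coeff 1 f ^ n = 1 := by rw [← PS.coeff_one_iter, hiter, coeff_one_X]
  have hc2 : coeff 1 f ^ 2 = 1 :=
    (pow_eq_one_iff_of_nonneg (sq_nonneg _) hn.ne').mp
      (by rw [← pow_mul, mul_comm, pow_mul, hc, one_pow])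
  have h2 : PS.iter f 2 = X :=
    PS.eq_X_of_iter_eq_X (PS.constantCoeff_iter hf0 2) (by rw [PS.coeff_one_iter, hc2]) hn.ne'
      (by rw [← PS.iter_mul hf0, mul_comm, PS.iter_mul hf0, hiter, PS.iter_X])
  have hn2 : n ≤ 2 := by
    by_contra
    exact hmin 2 two_pos (by omega) h2
  refine ⟨by omega, fun hn2 => ?_⟩
  subst hn2
  have hfX : f ≠ X := fun h => hmin 1 one_pos one_lt_two (by rw [PS.iter_one, h])
  exact (sq_eq_one_iff.mp hc2).resolve_left
    fun h1 => hfX (PS.eq_X_of_iter_eq_X hf0 h1 two_ne_zero h2)
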